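/- arXiv:2502.00240 — 2 statements merged into one kernel-verified Lean document; each statement's English description precedes it below -/
import Mathlib

section
/- Objective decrease for the proximal subgradient method: suppose F(x) = L(x) + R₁(x) − R₂(x) with R₁, R₂ convex and L differentiable, and the step x_{t+1} ∈ prox_{1/α}^{R₁}(x_t − α(∇L(x_t) − g_t)) with g_t ∈ ∂R₂(x_t), where h(x; x_t) := L(x_t) − R₂(x_t) + ⟨∇L(x_t) − g_t, x − x_t⟩ + (1/(2α))‖x − x_t‖₂² + R₁(x) is a majorant of F (i.e., h(x; x_t) ≥ F(x) for all x). Then F(x_t) − F(x_{t+1}) ≥ (1/(2α))‖x_t − x_{t+1}‖₂². -/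
/-!
The prox objective `φ z = ‖y - z‖² / (2α) + R₁ z`, with `y = xₜ - α (∇L xₜ - gₜ)`, is
`(1/α)`-strongly convex, so its minimiser `xₜ₊₁` satisfies the three-point inequality
`φ xₜ₊₁ + ‖xₜ - xₜ₊₁‖² / (2α) ≤ φ xₜ`. Completing the square shows that the majorant
`h(·; xₜ)` differs from `φ` by a constant; since `h(xₜ; xₜ) = F xₜ` and `F xₜ₊₁ ≤ h(xₜ₊₁; xₜ)`,
the decrease of `F` is at least that of `φ`.
-/

open scoped RealInnerProductSpace
open Filter Topology

section NormedSpace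

variable {E : Type*} [NormedAddCommGroup E] [NormedSpace ℝ E] {s : Set E} {m : ℝ} {f g : E → ℝ}

lemma StrongConvexOn.add_convexOn (hf : StrongConvexOn s m f) (hg : ConvexOn ℝ s g) :
    StrongConvexOn s m (f + g) := by
  simpa [StrongConvexOn] using hf.add hg.uniformConvexOn_zero

lemma StrongConvexOn.add_sq_le_of_isMinOn {x z : E} (hf : StrongConvexOn s m f)
    (hmin : IsMinOn f s x) (hx : x ∈ s) (hz : z ∈ s) :
    f x + m / 2 * ‖z - x‖ ^ 2 ≤ f z := by
  have hgrowth : ∀ t ∈ Set.Ioo (0 : ℝ) 1, f x + (1 - t) * (m / 2 * ‖z - x‖ ^ 2) ≤ f z := by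
    rintro t ⟨ht0, ht1⟩
    have hmem := hf.1 hz hx ht0.le (sub_nonneg.2 ht1.le) (add_sub_cancel t 1)
    have hcomb := hf.2 hz hx ht0.le (sub_nonneg.2 ht1.le) (add_sub_cancel t 1)
    have hmin_le : f x ≤ f (t • z + (1 - t) • x) := hmin hmem
    simp only [smul_eq_mul] at hcomb
    refine le_of_mul_le_mul_left ?_ ht0
    linarith
  have hlim : Tendsto (fun t : ℝ ↦ f x + (1 - t) * (m / 2 * ‖z - x‖ ^ 2)) (𝓝[>] 0)
      (𝓝 (f x + (1 - 0) * (m / 2 * ‖z - x‖ ^ 2))) :=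
    (Continuous.tendsto (by fun_prop) 0).mono_left nhdsWithin_le_nhds
  rw [sub_zero, one_mul] at hlim
  exact le_of_tendsto hlim (eventually_of_mem (Ioo_mem_nhdsGT one_pos) hgrowth)

end NormedSpace

section InnerProductSpace

variable {E : Type*} [NormedAddCommGroup E] [InnerProductSpace ℝ E] {s : Set E} {g : E → ℝ}

lemma strongConvexOn_mul_norm_sub_sq (hs : Convex ℝ s) (m : ℝ) (c : E) :
    StrongConvexOn s m fun z ↦ m / 2 * ‖z - c‖ ^ 2 := by
  have hsub : (fun z ↦ m / 2 * ‖z - c‖ ^ 2 - m / 2 * ‖z‖ ^ 2) =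
      ⇑((-m) • innerₛₗ ℝ c) + fun _ ↦ m / 2 * ‖c‖ ^ 2 := by
    funext z
    simp only [Pi.add_apply, LinearMap.smul_apply, innerₛₗ_apply_apply, smul_eq_mul]
    rw [norm_sub_sq_real, real_inner_comm]
    ring
  rw [strongConvexOn_iff_convex, hsub]
  exact (((-m) • innerₛₗ ℝ c).convexOn hs).add_const _

lemma prox_three_point {α : ℝ} (hg : ConvexOn ℝ Set.univ g) {y p : E}
    (hp : ∀ z, 1 / (2 * α) * ‖y - p‖ ^ 2 + g p ≤ 1 / (2 * α) * ‖y - z‖ ^ 2 + g z) (z : E) :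
    1 / (2 * α) * ‖y - p‖ ^ 2 + g p + 1 / (2 * α) * ‖z - p‖ ^ 2 ≤
      1 / (2 * α) * ‖y - z‖ ^ 2 + g z := by
  have hφ : StrongConvexOn Set.univ (1 / α) fun z ↦ 1 / (2 * α) * ‖y - z‖ ^ 2 + g z := by
    convert (strongConvexOn_mul_norm_sub_sq convex_univ (1 / α) y).add_convexOn hg using 1
    funext z
    rw [Pi.add_apply, norm_sub_rev]
    ring
  convert hφ.add_sq_le_of_isMinOn (fun z _ ↦ hp z) trivial (Set.mem_univ z) using 3
  ring

lemma inner_sub_add_norm_sub_sq_eq {α : ℝ} (hα : α ≠ 0) (x v z : E) :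
    ⟪v, z - x⟫ + 1 / (2 * α) * ‖z - x‖ ^ 2 =
      1 / (2 * α) * ‖x - α • v - z‖ ^ 2 - α / 2 * ‖v‖ ^ 2 := by
  rw [show x - α • v - z = -((z - x) + α • v) by abel, norm_neg, norm_add_sq_real, norm_smul,
    real_inner_smul_right, Real.norm_eq_abs, mul_pow, sq_abs, real_inner_comm]
  field_simp
  ring

end InnerProductSpace

theorem psm_objective_decrease_general {d : ℕ}
    (L R₁ R₂ F : EuclideanSpace ℝ (Fin d) → ℝ)
    (hR₁ : ConvexOn ℝ Set.univ R₁)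
    (hF : ∀ x, F x = L x + R₁ x - R₂ x)
    (α : ℝ) (hα : 0 < α)
    (xt xt1 gt : EuclideanSpace ℝ (Fin d))
    (hprox : ∀ z, (1 / (2 * α)) * ‖(xt - α • (gradient L xt - gt)) - xt1‖ ^ 2 + R₁ xt1 ≤
      (1 / (2 * α)) * ‖(xt - α • (gradient L xt - gt)) - z‖ ^ 2 + R₁ z)
    (hmaj : ∀ z, L xt - R₂ xt + ⟪gradient L xt - gt, z - xt⟫ +
      (1 / (2 * α)) * ‖z - xt‖ ^ 2 + R₁ z ≥ F z) :
    F xt - F xt1 ≥ (1 / (2 * α)) * ‖xt - xt1‖ ^ 2 := by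
  set v := gradient L xt - gt
  have hthree_point := prox_three_point hR₁ hprox xt
  have hsquare_xt := inner_sub_add_norm_sub_sq_eq hα.ne' xt v xt
  have hsquare_xt1 := inner_sub_add_norm_sub_sq_eq hα.ne' xt v xt1
  rw [sub_self, inner_zero_right, norm_zero] at hsquare_xt
  linarith [hF xt, hmaj xt1]

/-- Objective decrease for the proximal subgradient method:
`F(x_t) − F(x_{t+1}) ≥ ‖x_t − x_{t+1}‖²/(2α)`. -/
theorem psm_objective_decrease {d : ℕ}
    (L R₁ R₂ F : EuclideanSpace ℝ (Fin d) → ℝ)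
    (hL : Differentiable ℝ L)
    (hR₁ : ConvexOn ℝ Set.univ R₁) (hR₂ : ConvexOn ℝ Set.univ R₂)
    (hF : ∀ x, F x = L x + R₁ x - R₂ x)
    (α : ℝ) (hα : 0 < α)
    (xt xt1 gt : EuclideanSpace ℝ (Fin d))
    (hgt : ∀ z, R₂ z ≥ R₂ xt + ⟪gt, z - xt⟫)
    (hprox : ∀ z, (1 / (2 * α)) * ‖(xt - α • (gradient L xt - gt)) - xt1‖ ^ 2 + R₁ xt1 ≤
      (1 / (2 * α)) * ‖(xt - α • (gradient L xt - gt)) - z‖ ^ 2 + R₁ z)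
    (hmaj : ∀ z, L xt - R₂ xt + ⟪gradient L xt - gt, z - xt⟫ +
      (1 / (2 * α)) * ‖z - xt‖ ^ 2 + R₁ z ≥ F z) :
    F xt - F xt1 ≥ (1 / (2 * α)) * ‖xt - xt1‖ ^ 2 :=
  psm_objective_decrease_general L R₁ R₂ F hR₁ hF α hα xt xt1 gt hprox hmaj
end

section
/- Let (e_t)_{t≥t₁} be nonnegative reals satisfying e_t² ≤ M·(Δ_t − Δ_{t+1})·e_{t−1} for all t > t₁, where (Δ_t) is non-increasing with Δ_t ≥ 0 and M > 0. Then for all T ≥ t₁ + 2, Σ_{t=t₁+1}^T e_t ≤ M·Δ_{t₁+1} + e_{t₁}, and hence Σ_{t=t₁+1}^∞ e_t ≤ M·Δ_{t₁+1} + e_{t₁} < ∞. -/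
open Finset

/-- Summability lemma for KL-type rates: if `e_t² ≤ M (Δ_t − Δ_{t+1}) e_{t−1}` for
`t > t₁`, then the tail sums of `e` are uniformly bounded and `e` is summable. -/
theorem kl_summability_lemma (t₁ : ℕ) (e Δ : ℕ → ℝ)
    (he : ∀ t, 0 ≤ e t) (hΔpos : ∀ t, 0 ≤ Δ t) (hΔmono : ∀ t, Δ (t + 1) ≤ Δ t)
    (M : ℝ) (hM : 0 < M)
    (hrec : ∀ t, t₁ < t → e t ^ 2 ≤ M * (Δ t - Δ (t + 1)) * e (t - 1)) :
    (∀ T, t₁ + 2 ≤ T → ∑ t ∈ Icc (t₁ + 1) T, e t ≤ M * Δ (t₁ + 1) + e t₁) ∧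
    Summable (fun n : ℕ => e (t₁ + 1 + n)) ∧
    ∑' n : ℕ, e (t₁ + 1 + n) ≤ M * Δ (t₁ + 1) + e t₁ := by
  -- AM-GM step
  have step : ∀ n : ℕ, 2 * e (t₁ + 1 + n) ≤
      M * (Δ (t₁ + 1 + n) - Δ (t₁ + 1 + n + 1)) + e (t₁ + n) := by
    intro n
    have h := hrec (t₁ + 1 + n) (by omega)
    have hsub : t₁ + 1 + n - 1 = t₁ + n := by omega
    rw [hsub] at h
    have ha : 0 ≤ M * (Δ (t₁ + 1 + n) - Δ (t₁ + 1 + n + 1)) := by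
      have := hΔmono (t₁ + 1 + n)
      nlinarith
    nlinarith [he (t₁ + 1 + n), he (t₁ + n),
      sq_nonneg (M * (Δ (t₁ + 1 + n) - Δ (t₁ + 1 + n + 1)) - e (t₁ + n)),
      sq_nonneg (e (t₁ + 1 + n) - (M * (Δ (t₁ + 1 + n) - Δ (t₁ + 1 + n + 1)) + e (t₁ + n)) / 2)]
  -- telescoped sum of the step inequality
  have sum_step : ∀ N : ℕ, 2 * ∑ n ∈ range N, e (t₁ + 1 + n) ≤
      M * (Δ (t₁ + 1) - Δ (t₁ + 1 + N)) + ∑ n ∈ range N, e (t₁ + n) := by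
    intro N
    induction N with
    | zero => simp
    | succ K ih =>
      rw [Finset.sum_range_succ, Finset.sum_range_succ]
      have := step K
      have heq : t₁ + 1 + (K + 1) = t₁ + 1 + K + 1 := by omega
      rw [heq]
      linarith
  -- shifted sum bound
  have shift : ∀ N : ℕ, ∑ n ∈ range N, e (t₁ + n) ≤ e t₁ + ∑ n ∈ range N, e (t₁ + 1 + n) := by
    intro N
    cases N with
    | zero => simpa using he t₁
    | succ K =>
      rw [Finset.sum_range_succ' (fun n => e (t₁ + n)) K, Finset.sum_range_succ]
      have : ∀ n, e (t₁ + (n + 1)) = e (t₁ + 1 + n) := by intro n; congr 1; omega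
      simp only [this, Nat.add_zero]
      have := he (t₁ + 1 + K)
      linarith
  -- uniform bound on partial sums
  have key : ∀ N : ℕ, ∑ n ∈ range N, e (t₁ + 1 + n) ≤ M * Δ (t₁ + 1) + e t₁ := by
    intro N
    have h1 := sum_step N
    have h2 := shift N
    have h3 := hΔpos (t₁ + 1 + N)
    nlinarith
  refine ⟨?_, ?_, ?_⟩
  · intro T hT
    rw [← Finset.Ico_add_one_right_eq_Icc, Finset.sum_Ico_eq_sum_range]
    exact key _
  · exact summable_of_sum_range_le (fun n => he _) key
  · exact Summable.tsum_le_of_sum_range_le (summable_of_sum_range_le (fun n => he _) key) key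
end
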